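/- arXiv:1905.05611 — 7 statements merged into one kernel-verified Lean document; each statement's English description precedes it below -/
import Mathlib

section
/- For any sequence (p_j) with 0 ≤ p_j ≤ 1, if n is such that R(1,n) = Σ_{j=1}^n r_j ≤ 1, then Q(1,n+1)·R(1,n+1) ≥ Q(1,n)·R(1,n); that is, the optimal value V(n) = Q(1,n)R(1,n) is non-decreasing in n for n ≤ N* := sup{n : R(1,n) ≤ 1}. -/
noncomputable def Rsum (p : ℕ → ℝ) (k n : ℕ) : ℝ := ∑ j ∈ Finset.Icc k n, p j / (1 - p j)

noncomputable def Qprod (p : ℕ → ℝ) (k n : ℕ) : ℝ := ∏ j ∈ Finset.Icc k n, (1 - p j)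

open scoped Classical in
noncomputable def thr (p : ℕ → ℝ) (n : ℕ) : ℕ :=
  if Rsum p 1 n ≤ 1 then 1 else Nat.findGreatest (fun k => 1 ≤ Rsum p k n) n

noncomputable def Val (p : ℕ → ℝ) (n : ℕ) : ℝ := Qprod p (thr p n) n * Rsum p (thr p n) n

/-!
Appending the index `n + 1` multiplies `Q` by `q = 1 - p` and adds `r = p / q` to `R`, so
`Q(1,n+1) R(1,n+1) = Q(1,n) (q R + p) = Q(1,n) (R + p (1 - R))`,
which is at least `Q(1,n) R(1,n)` exactly when `p (1 - R) ≥ 0`, i.e. as long as `R(1,n) ≤ 1`.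
-/

section OddsAlgorithm

variable (p : ℕ → ℝ) {k n : ℕ}

theorem Rsum_succ (hk : k ≤ n + 1) :
    Rsum p k (n + 1) = Rsum p k n + p (n + 1) / (1 - p (n + 1)) :=
  Finset.sum_Icc_succ_top hk _

theorem Qprod_succ (hk : k ≤ n + 1) :
    Qprod p k (n + 1) = Qprod p k n * (1 - p (n + 1)) :=
  Finset.prod_Icc_succ_top hk _

theorem Qprod_nonneg {p : ℕ → ℝ} (hp : ∀ j, p j ≤ 1) (k n : ℕ) : 0 ≤ Qprod p k n :=
  Finset.prod_nonneg fun j _ => sub_nonneg.mpr (hp j)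

theorem Qprod_mul_Rsum_succ (hk : k ≤ n + 1) (hq : p (n + 1) ≠ 1) :
    Qprod p k (n + 1) * Rsum p k (n + 1) =
      Qprod p k n * (Rsum p k n + p (n + 1) * (1 - Rsum p k n)) := by
  have hq' : 1 - p (n + 1) ≠ 0 := sub_ne_zero.mpr hq.symm
  rw [Qprod_succ p hk, Rsum_succ p hk, mul_assoc, mul_add, mul_div_cancel₀ _ hq']
  ring

end OddsAlgorithm

theorem stmt_1 (p : ℕ → ℝ) (hp0 : ∀ j, 0 ≤ p j) (hp1 : ∀ j, p j < 1)
    (n : ℕ) (hR : Rsum p 1 n ≤ 1) :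
    Qprod p 1 n * Rsum p 1 n ≤ Qprod p 1 (n + 1) * Rsum p 1 (n + 1) := by
  rw [Qprod_mul_Rsum_succ p (Nat.le_add_left 1 n) (hp1 (n + 1)).ne]
  have hQ : 0 ≤ Qprod p 1 n := Qprod_nonneg (fun j => (hp1 j).le) 1 n
  have hgain : 0 ≤ p (n + 1) * (1 - Rsum p 1 n) := mul_nonneg (hp0 _) (sub_nonneg.mpr hR)
  exact mul_le_mul_of_nonneg_left (le_add_of_nonneg_right hgain) hQ
end

section
/- If the sequence of probabilities (p_j) is non-increasing, then the optimal threshold satisfies: s(n+1) ∈ {s(n), s(n)+1} for every n. -/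
namespace Nat

variable {P Q : ℕ → Prop} [DecidablePred P] [DecidablePred Q]

theorem findGreatest_le_of_forall_not {m n : ℕ} (h : ∀ k, m < k → ¬P k) :
    Nat.findGreatest P n ≤ m := by
  by_contra! hlt
  exact h _ hlt (Nat.findGreatest_of_ne_zero rfl (by omega))

theorem findGreatest_succ_le_findGreatest_add_one {n : ℕ} (h : ∀ k, Q (k + 1) → P k) :
    Nat.findGreatest Q (n + 1) ≤ Nat.findGreatest P n + 1 := by
  rcases hQ : Nat.findGreatest Q (n + 1) with _ | k
  · omega
  · have hk : k ≤ n := by have := Nat.findGreatest_le (P := Q) (n + 1); omega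
    exact Nat.succ_le_succ
      (Nat.le_findGreatest hk (h k (Nat.findGreatest_of_ne_zero hQ k.succ_ne_zero)))

end Nat

noncomputable def odds (p : ℕ → ℝ) (j : ℕ) : ℝ := p j / (1 - p j)

section Odds

variable {p : ℕ → ℝ}

theorem odds_nonneg {j : ℕ} (hp0 : 0 ≤ p j) (hp1 : p j < 1) : 0 ≤ odds p j :=
  div_nonneg hp0 (by linarith)

theorem odds_antitone (hp1 : ∀ j, p j < 1) (hp : Antitone p) : Antitone (odds p) := by
  intro a b hab
  have hba : p b ≤ p a := hp hab
  rw [odds, odds, div_le_div_iff₀ (by linarith [hp1 b]) (by linarith [hp1 a])]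
  nlinarith

theorem Rsum_eq_sum_odds (k n : ℕ) : Rsum p k n = ∑ j ∈ Finset.Icc k n, odds p j := rfl

theorem Rsum_succ_right {k n : ℕ} (h : k ≤ n + 1) :
    Rsum p k (n + 1) = Rsum p k n + odds p (n + 1) :=
  Finset.sum_Icc_succ_top h _

theorem Rsum_eq_odds_add {k n : ℕ} (h : k ≤ n) : Rsum p k n = odds p k + Rsum p (k + 1) n := by
  rw [Rsum_eq_sum_odds, Rsum_eq_sum_odds, Finset.Icc_add_one_left_eq_Ioc,
    Finset.add_sum_Ioc_eq_sum_Icc h]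

theorem Rsum_of_lt {k n : ℕ} (h : n < k) : Rsum p k n = 0 := by
  rw [Rsum, Finset.Icc_eq_empty_of_lt h, Finset.sum_empty]

theorem Rsum_le_Rsum_succ_right (hr0 : ∀ j, 0 ≤ odds p j) (k n : ℕ) : Rsum p k n ≤ Rsum p k (n + 1) :=
  Finset.sum_le_sum_of_subset_of_nonneg (Finset.Icc_subset_Icc_right n.le_succ)
    (fun j _ _ => hr0 j)

theorem Rsum_anti_left (hr0 : ∀ j, 0 ≤ odds p j) {j k : ℕ} (n : ℕ) (h : j ≤ k) : Rsum p k n ≤ Rsum p j n :=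
  Finset.sum_le_sum_of_subset_of_nonneg (Finset.Icc_subset_Icc_left h) (fun i _ _ => hr0 i)

theorem Rsum_succ_succ_le (hr : Antitone (odds p)) (k n : ℕ) :
    Rsum p (k + 1) (n + 1) ≤ Rsum p k n := by
  rcases le_or_gt k n with hk | hk
  · rw [Rsum_succ_right (by omega), Rsum_eq_odds_add hk]
    linarith [hr (show k ≤ n + 1 by omega)]
  · rw [Rsum_of_lt (by omega), Rsum_of_lt hk]

theorem Rsum_two_lt_one (hr : Antitone (odds p)) {n : ℕ} (h : Rsum p 1 n ≤ 1)
    (h' : 1 < Rsum p 1 (n + 1)) : Rsum p 2 n < 1 := by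
  rcases Nat.eq_zero_or_pos n with rfl | hn
  · rw [Rsum_of_lt (by omega)]
    exact one_pos
  · have hpos : 0 < odds p (n + 1) := by
      rw [Rsum_succ_right (by omega)] at h'
      linarith
    rw [Rsum_eq_odds_add hn] at h
    linarith [hr (show 1 ≤ n + 1 by omega)]

theorem thr_le_thr_succ (hr0 : ∀ j, 0 ≤ odds p j) (n : ℕ) : thr p n ≤ thr p (n + 1) := by
  unfold thr
  split_ifs with h h' h'
  · exact le_rfl
  · exact Nat.le_findGreatest (by omega) (not_le.mp h').le
  · exact absurd ((Rsum_le_Rsum_succ_right hr0 1 n).trans h') h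
  · exact Nat.findGreatest_mono (fun k hk => hk.trans (Rsum_le_Rsum_succ_right hr0 k n))
      n.le_succ

theorem thr_succ_le_thr_add_one (hr0 : ∀ j, 0 ≤ odds p j) (hr : Antitone (odds p)) (n : ℕ) :
    thr p (n + 1) ≤ thr p n + 1 := by
  have hshift := Nat.findGreatest_succ_le_findGreatest_add_one
    (P := fun k => 1 ≤ Rsum p k n) (Q := fun k => 1 ≤ Rsum p k (n + 1)) (n := n)
    (fun k hk => hk.trans (Rsum_succ_succ_le hr k n))
  unfold thr
  split_ifs with h h' h'
  · exact Nat.le_succ 1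
  · exact Nat.le_add_left 1 _
  · -- `thr p n = 1` here, but `findGreatest` alone could exceed 1 if `Rsum p 1 n = 1`.
    have hsmall : Nat.findGreatest (fun k => 1 ≤ Rsum p k n) n ≤ 1 :=
      Nat.findGreatest_le_of_forall_not fun k hk hk1 =>
        (Rsum_two_lt_one hr h' (not_le.mp h)).not_ge (hk1.trans (Rsum_anti_left hr0 n hk))
    omega
  · exact hshift

end Odds

theorem stmt_2 (p : ℕ → ℝ) (hp0 : ∀ j, 0 ≤ p j) (hp1 : ∀ j, p j < 1)
    (hmono : ∀ j, p (j + 1) ≤ p j) (n : ℕ) :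
    thr p (n + 1) = thr p n ∨ thr p (n + 1) = thr p n + 1 := by
  have hr0 : ∀ j, 0 ≤ odds p j := fun j => odds_nonneg (hp0 j) (hp1 j)
  have hr : Antitone (odds p) := odds_antitone hp1 (antitone_nat_of_succ_le hmono)
  have hlow := thr_le_thr_succ hr0 n
  have hhigh := thr_succ_le_thr_add_one hr0 hr n
  omega
end

section
/- Suppose s(n+1) = s(n) =: s and R(s,n) ≥ 1. Then Q(s,n+1)·R(s,n+1) ≤ Q(s,n)·R(s,n); i.e., if the optimal threshold does not change when passing from the n-problem to the (n+1)-problem, the optimal value does not increase: V(n+1) ≤ V(n). -/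
/-
Appending the index `n + 1` multiplies `Q` by `q = 1 - p` and adds `r = p / q` to `R`, and
`q (r + R) = p + q R = R - p (R - 1)`, which is at most `R` as soon as `R ≥ 1`.
-/

theorem one_sub_mul_div_one_sub_add {x : ℝ} (hx : x ≠ 1) (y : ℝ) :
    (1 - x) * (x / (1 - x) + y) = y - x * (y - 1) := by
  have : 1 - x ≠ 0 := sub_ne_zero.mpr hx.symm
  field_simp
  ring

theorem one_sub_mul_div_one_sub_add_le {x y : ℝ} (hx0 : 0 ≤ x) (hx1 : x ≠ 1) (hy : 1 ≤ y) :
    (1 - x) * (x / (1 - x) + y) ≤ y := by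
  rw [one_sub_mul_div_one_sub_add hx1]
  nlinarith

namespace Rsum

theorem le_of_one_le {p : ℕ → ℝ} {k n : ℕ} (h : 1 ≤ Rsum p k n) : k ≤ n := by
  by_contra hkn
  have : Finset.Icc k n = ∅ := Finset.Icc_eq_empty hkn
  simp only [Rsum, this, Finset.sum_empty] at h
  linarith

theorem succ (p : ℕ → ℝ) {k n : ℕ} (h : k ≤ n + 1) :
    Rsum p k (n + 1) = p (n + 1) / (1 - p (n + 1)) + Rsum p k n := by
  rw [Rsum, Rsum, Finset.sum_Icc_succ_top h, add_comm]

end Rsum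

namespace Qprod

theorem nonneg {p : ℕ → ℝ} (hp1 : ∀ j, p j ≤ 1) (k n : ℕ) : 0 ≤ Qprod p k n :=
  Finset.prod_nonneg fun j _ => sub_nonneg.mpr (hp1 j)

theorem succ (p : ℕ → ℝ) {k n : ℕ} (h : k ≤ n + 1) :
    Qprod p k (n + 1) = (1 - p (n + 1)) * Qprod p k n := by
  rw [Qprod, Qprod, Finset.prod_Icc_succ_top h, mul_comm]

end Qprod

theorem stmt_3_general (p : ℕ → ℝ) (hp0 : ∀ j, 0 ≤ p j) (hp1 : ∀ j, p j < 1)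
    (n s : ℕ)
    (hR : 1 ≤ Rsum p s n) :
    Qprod p s (n + 1) * Rsum p s (n + 1) ≤ Qprod p s n * Rsum p s n := by
  have hs : s ≤ n + 1 := (Rsum.le_of_one_le hR).trans n.le_succ
  rw [Qprod.succ p hs, Rsum.succ p hs, mul_comm (1 - p (n + 1)), mul_assoc]
  exact mul_le_mul_of_nonneg_left
    (one_sub_mul_div_one_sub_add_le (hp0 _) (hp1 _).ne hR) (Qprod.nonneg (fun j => (hp1 j).le) s n)

theorem stmt_3 (p : ℕ → ℝ) (hp0 : ∀ j, 0 ≤ p j) (hp1 : ∀ j, p j < 1)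
    (n s : ℕ) (hsn : thr p n = s) (hsn1 : thr p (n + 1) = s)
    (hR : 1 ≤ Rsum p s n) :
    Qprod p s (n + 1) * Rsum p s (n + 1) ≤ Qprod p s n * Rsum p s n :=
  stmt_3_general p hp0 hp1 n s hR
end

section
/- For fixed n and probabilities p_1,…,p_n ∈ [0,1), the function f(k) = Q(k,n)·R(k,n) is unimodal in k ∈ {1,…,n}: letting s be the optimal threshold (largest k with R(k,n) ≥ 1, or 1 if no such k), f is non-decreasing on {1,…,s} and non-increasing on {s,…,n}. -/
/-! With `f k = Q(k,n) R(k,n)`, peeling off the factor `q_k` and the summand `r_k` gives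
`f (k+1) - f k = Q(k+1,n) p_k (R(k+1,n) - 1)`. Since `R(·,n)` is non-increasing, the sign of
this difference is `≥ 0` below the threshold `s` (where `R(k+1,n) ≥ R(s,n) ≥ 1`) and `≤ 0`
from `s` on (where `k+1` is past the largest index with `R ≥ 1`). -/

open Finset

section

variable {p : ℕ → ℝ} {k n : ℕ}

lemma Qprod_eq_mul_Qprod_succ (hk : k ≤ n) : Qprod p k n = (1 - p k) * Qprod p (k + 1) n := by
  rw [Qprod, ← insert_Icc_add_one_left_eq_Icc hk, prod_insert (by simp), Qprod]

lemma Rsum_eq_add_Rsum_succ (hk : k ≤ n) :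
    Rsum p k n = p k / (1 - p k) + Rsum p (k + 1) n := by
  rw [Rsum, ← insert_Icc_add_one_left_eq_Icc hk, sum_insert (by simp), Rsum]

lemma Qprod_mul_Rsum_succ_sub (hk : k ≤ n) (hpk : p k < 1) :
    Qprod p (k + 1) n * Rsum p (k + 1) n - Qprod p k n * Rsum p k n =
      Qprod p (k + 1) n * p k * (Rsum p (k + 1) n - 1) := by
  have hq : 1 - p k ≠ 0 := (sub_pos.2 hpk).ne'
  rw [Qprod_eq_mul_Qprod_succ hk, Rsum_eq_add_Rsum_succ hk]
  field_simp
  ring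

lemma Qprod_pos (hp1 : ∀ j ≤ n, p j < 1) : 0 < Qprod p k n :=
  prod_pos fun j hj => sub_pos.2 (hp1 j (mem_Icc.1 hj).2)

lemma Rsum_antitone (hp0 : ∀ j ≤ n, 0 ≤ p j) (hp1 : ∀ j ≤ n, p j < 1) :
    Antitone (Rsum p · n) := fun _ _ hab =>
  sum_le_sum_of_subset_of_nonneg (Icc_subset_Icc_left hab) fun j hj _ =>
    div_nonneg (hp0 j (mem_Icc.1 hj).2) (sub_nonneg.2 (hp1 j (mem_Icc.1 hj).2).le)

lemma Qprod_mul_Rsum_le_succ (hp0 : ∀ j ≤ n, 0 ≤ p j) (hp1 : ∀ j ≤ n, p j < 1)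
    (hk : k ≤ n) (hR : 1 ≤ Rsum p (k + 1) n) :
    Qprod p k n * Rsum p k n ≤ Qprod p (k + 1) n * Rsum p (k + 1) n := by
  have hdiff := Qprod_mul_Rsum_succ_sub hk (hp1 k hk)
  have hsign : 0 ≤ Qprod p (k + 1) n * p k * (Rsum p (k + 1) n - 1) :=
    mul_nonneg (mul_nonneg (Qprod_pos hp1).le (hp0 k hk)) (sub_nonneg.2 hR)
  linarith

lemma Qprod_mul_Rsum_succ_le (hp0 : ∀ j ≤ n, 0 ≤ p j) (hp1 : ∀ j ≤ n, p j < 1)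
    (hk : k ≤ n) (hR : Rsum p (k + 1) n ≤ 1) :
    Qprod p (k + 1) n * Rsum p (k + 1) n ≤ Qprod p k n * Rsum p k n := by
  have hdiff := Qprod_mul_Rsum_succ_sub hk (hp1 k hk)
  have hsign : Qprod p (k + 1) n * p k * (Rsum p (k + 1) n - 1) ≤ 0 :=
    mul_nonpos_of_nonneg_of_nonpos (mul_nonneg (Qprod_pos hp1).le (hp0 k hk))
      (sub_nonpos.2 hR)
  linarith

lemma thr_le_max : thr p n ≤ max 1 n := by
  unfold thr
  split_ifs
  · exact le_max_left 1 n
  · exact (Nat.findGreatest_le n).trans (le_max_right 1 n)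

lemma one_le_Rsum_thr (h : 1 < thr p n) : 1 ≤ Rsum p (thr p n) n := by
  have hR : ¬Rsum p 1 n ≤ 1 := fun hR => by simp [thr, hR] at h
  have hn : 1 ≤ n := by
    by_contra! hn
    simp [Rsum, Icc_eq_empty_of_lt hn] at hR
  rw [thr, if_neg hR]
  exact Nat.findGreatest_spec (P := fun k => 1 ≤ Rsum p k n) hn (not_le.1 hR).le

lemma Rsum_le_one_of_thr_lt (hp0 : ∀ j ≤ n, 0 ≤ p j) (hp1 : ∀ j ≤ n, p j < 1) {m : ℕ}
    (hm : thr p n < m) (hmn : m ≤ n) : Rsum p m n ≤ 1 := by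
  by_cases hR : Rsum p 1 n ≤ 1
  · rw [thr, if_pos hR] at hm
    exact (Rsum_antitone hp0 hp1 hm.le).trans hR
  · rw [thr, if_neg hR] at hm
    exact (not_le.1 (Nat.findGreatest_is_greatest (P := fun k => 1 ≤ Rsum p k n) hm hmn)).le

end

theorem stmt_8 (p : ℕ → ℝ) (n : ℕ) (hp0 : ∀ j, j ≤ n → 0 ≤ p j)
    (hp1 : ∀ j, j ≤ n → p j < 1) :
    (∀ k, 1 ≤ k → k < thr p n →
      Qprod p k n * Rsum p k n ≤ Qprod p (k + 1) n * Rsum p (k + 1) n) ∧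
    (∀ k, thr p n ≤ k → k < n →
      Qprod p (k + 1) n * Rsum p (k + 1) n ≤ Qprod p k n * Rsum p k n) := by
  refine ⟨fun k hk1 hk => ?_, fun k hk hkn => ?_⟩
  · have hkn : k < n := by have := thr_le_max (p := p) (n := n); omega
    have hR : 1 ≤ Rsum p (k + 1) n :=
      (one_le_Rsum_thr (by omega)).trans (Rsum_antitone hp0 hp1 (by omega : k + 1 ≤ thr p n))
    exact Qprod_mul_Rsum_le_succ hp0 hp1 hkn.le hR
  · exact Qprod_mul_Rsum_succ_le hp0 hp1 hkn.le (Rsum_le_one_of_thr_lt hp0 hp1 (by omega) hkn)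
end

section
/- Suppose (p_j) ⊂ (0,1) is non-increasing and s(n+1) = s(n) =: s with R(s,n) ≥ 1. Then V(n+1) = V(n) if and only if R(s,n) = 1. -/
namespace OddsAlgorithm

variable {p : ℕ → ℝ} {k n : ℕ}

lemma Rsum_eq_zero_of_lt (h : n < k) : Rsum p k n = 0 := by
  simp [Rsum, Finset.Icc_eq_empty_of_lt h]

lemma le_of_one_le_Rsum (h : 1 ≤ Rsum p k n) : k ≤ n := by
  by_contra! hlt
  linarith [Rsum_eq_zero_of_lt (p := p) hlt]

lemma Rsum_succ_top (h : k ≤ n + 1) :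
    Rsum p k (n + 1) = Rsum p k n + p (n + 1) / (1 - p (n + 1)) :=
  Finset.sum_Icc_succ_top h _

lemma Qprod_succ_top (h : k ≤ n + 1) : Qprod p k (n + 1) = Qprod p k n * (1 - p (n + 1)) :=
  Finset.prod_Icc_succ_top h _

lemma Qprod_pos (hp1 : ∀ j, p j < 1) : 0 < Qprod p k n :=
  Finset.prod_pos fun j _ => sub_pos.mpr (hp1 j)

lemma Qprod_mul_Rsum_succ_sub (h : k ≤ n + 1) (hq : 1 - p (n + 1) ≠ 0) :
    Qprod p k (n + 1) * Rsum p k (n + 1) - Qprod p k n * Rsum p k n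
      = Qprod p k n * p (n + 1) * (1 - Rsum p k n) := by
  rw [Rsum_succ_top h, Qprod_succ_top h]
  field_simp
  ring

end OddsAlgorithm

open OddsAlgorithm

theorem stmt_10_general (p : ℕ → ℝ) (hp0 : ∀ j, 0 < p j) (hp1 : ∀ j, p j < 1)
    (n s : ℕ)
    (hsn : thr p n = s) (hsn1 : thr p (n + 1) = s) (hR : 1 ≤ Rsum p s n) :
    Val p (n + 1) = Val p n ↔ Rsum p s n = 1 := by
  have hs_le : s ≤ n + 1 := (le_of_one_le_Rsum hR).trans n.le_succ
  have hdiff : Val p (n + 1) - Val p n = Qprod p s n * p (n + 1) * (1 - Rsum p s n) := by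
    rw [Val, Val, hsn, hsn1]
    exact Qprod_mul_Rsum_succ_sub hs_le (sub_pos.mpr (hp1 _)).ne'
  have hfactor : Qprod p s n * p (n + 1) ≠ 0 := (mul_pos (Qprod_pos hp1) (hp0 _)).ne'
  rw [← sub_eq_zero, hdiff, mul_eq_zero, or_iff_right hfactor, sub_eq_zero, eq_comm]

theorem stmt_10 (p : ℕ → ℝ) (hp0 : ∀ j, 0 < p j) (hp1 : ∀ j, p j < 1)
    (hmono : ∀ j, p (j + 1) ≤ p j) (n s : ℕ)
    (hsn : thr p n = s) (hsn1 : thr p (n + 1) = s) (hR : 1 ≤ Rsum p s n) :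
    Val p (n + 1) = Val p n ↔ Rsum p s n = 1 :=
  stmt_10_general p hp0 hp1 n s hsn hsn1 hR
end

section
/- For integers 1 ≤ k < n−1 with n ≥ 3, the difference of harmonic numbers H(n) − H(k) = Σ_{j=k+1}^n 1/j is never a positive integer (in fact it is never an integer when it has at least two summands). -/
/-!
Among `k + 1, …, n` exactly one number is divisible by the highest power `2 ^ M` of two that
occurs: of two odd multiples `2 ^ M * u < 2 ^ M * w`, the even multiple `2 ^ M * (u + 1)` lies
strictly between them. Hence adding the summands one at a time never produces a cancellation of
the lowest 2-adic valuation, and `∑ 1 / j` has 2-adic valuation `-M`. With at least two summands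
some `j` is even, so `M ≥ 1` and the sum is not an integer.
-/

open Finset

lemma padicValNat_two_pow_mul_odd {u : ℕ} (i : ℕ) (hu : Odd u) :
    padicValNat 2 (2 ^ i * u) = i := by
  rw [padicValNat.mul (by positivity) hu.pos.ne', padicValNat.prime_pow,
    padicValNat.eq_zero_of_not_dvd hu.not_two_dvd_nat, add_zero]

lemma exists_between_padicValNat_two_lt {a b : ℕ} (ha : a ≠ 0) (hab : a < b)
    (hv : padicValNat 2 a = padicValNat 2 b) :
    ∃ m, a < m ∧ m < b ∧ padicValNat 2 a < padicValNat 2 m := by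
  obtain ⟨i, u, hu, rfl⟩ := Nat.exists_eq_two_pow_mul_odd ha
  obtain ⟨j, w, hw, rfl⟩ := Nat.exists_eq_two_pow_mul_odd (n := b) (by omega)
  rw [padicValNat_two_pow_mul_odd i hu, padicValNat_two_pow_mul_odd j hw] at hv
  subst hv
  have huw : u + 1 < w := by
    have := Nat.lt_of_mul_lt_mul_left hab
    obtain ⟨_, rfl⟩ := hu
    obtain ⟨_, rfl⟩ := hw
    omega
  have hu_succ : 1 ≤ padicValNat 2 (u + 1) :=
    one_le_padicValNat_of_dvd (by omega) (Nat.even_add_one.mpr (Nat.not_even_iff_odd.mpr hu)).two_dvd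
  refine ⟨2 ^ i * (u + 1), by gcongr; omega, by gcongr, ?_⟩
  rw [padicValNat_two_pow_mul_odd i hu, padicValNat.mul (by positivity) (by omega),
    padicValNat.prime_pow]
  omega

lemma sup_padicValNat_two_Ioc_ne {k n : ℕ} (hkn : k < n) :
    (Ioc k n).sup (padicValNat 2) ≠ padicValNat 2 (n + 1) := by
  intro h
  obtain ⟨j, hj, hjmax⟩ := exists_mem_eq_sup (Ioc k n) (nonempty_Ioc.mpr hkn) (padicValNat 2)
  rw [mem_Ioc] at hj
  obtain ⟨m, hjm, hmn, hlt⟩ :=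
    exists_between_padicValNat_two_lt (by omega) (Nat.lt_succ_of_le hj.2) (hjmax ▸ h)
  exact (hjmax ▸ hlt).not_ge (le_sup (mem_Ioc.mpr ⟨by omega, by omega⟩))

lemma one_le_sup_padicValNat_two_Ioc {k n : ℕ} (hkn : k + 2 ≤ n) :
    1 ≤ (Ioc k n).sup (padicValNat 2) :=
  le_sup_of_le (b := 2 * ((k + 2) / 2)) (mem_Ioc.mpr ⟨by omega, by omega⟩)
    (one_le_padicValNat_of_dvd (by omega) (dvd_mul_right 2 _))

lemma sum_Ioc_inv_pos {k n : ℕ} (hkn : k < n) : 0 < ∑ j ∈ Ioc k n, (j : ℚ)⁻¹ :=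
  sum_pos (fun j hj => inv_pos.mpr (Nat.cast_pos.mpr (by grind))) (nonempty_Ioc.mpr hkn)

theorem padicValRat_two_sum_Ioc_inv {k n : ℕ} (hkn : k < n) :
    padicValRat 2 (∑ j ∈ Ioc k n, (j : ℚ)⁻¹) = -(((Ioc k n).sup (padicValNat 2) : ℕ) : ℤ) := by
  induction n, hkn using Nat.le_induction with
  | base => simp [padicValRat.inv, ← padicValRat.of_nat]
  | succ n hkn ih =>
    replace hkn : k < n := hkn
    have hval : padicValRat 2 (∑ j ∈ Ioc k n, (j : ℚ)⁻¹) ≠ padicValRat 2 ((n + 1 : ℕ) : ℚ)⁻¹ := by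
      rw [ih, padicValRat.inv, padicValRat.of_nat, Ne, neg_inj, Nat.cast_inj]
      exact sup_padicValNat_two_Ioc_ne hkn
    have hsum := sum_Ioc_succ_top hkn.le (fun j : ℕ => (j : ℚ)⁻¹)
    rw [hsum, padicValRat.add_eq_min (hsum ▸ sum_Ioc_inv_pos (by omega)).ne'
      (sum_Ioc_inv_pos hkn).ne' (by positivity) hval, ih, padicValRat.inv, padicValRat.of_nat,
      min_neg_neg, ← insert_Ioc_right_eq_Ioc_add_one hkn.le, sup_insert, Nat.cast_max, max_comm]

lemma harmonic_sub_harmonic_eq_sum_Ioc {k n : ℕ} (hkn : k ≤ n) :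
    harmonic n - harmonic k = ∑ j ∈ Ioc k n, (j : ℚ)⁻¹ := by
  rw [harmonic_eq_sum_Icc, harmonic_eq_sum_Icc, sub_eq_iff_eq_add']
  exact (sum_Ioc_consecutive _ (Nat.zero_le k) hkn).symm

theorem stmt_14_general (k n : ℕ) (hkn : k < n - 1) :
    ¬ ∃ z : ℤ, harmonic n - harmonic k = (z : ℚ) := by
  rintro ⟨z, hz⟩
  have hval := padicValRat_two_sum_Ioc_inv (k := k) (n := n) (by omega)
  rw [← harmonic_sub_harmonic_eq_sum_Ioc (by omega), hz, padicValRat.of_int] at hval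
  have hM := one_le_sup_padicValNat_two_Ioc (k := k) (n := n) (by omega)
  omega

theorem stmt_14 (k n : ℕ) (hk : 1 ≤ k) (hn : 3 ≤ n) (hkn : k < n - 1) :
    ¬ ∃ z : ℤ, harmonic n - harmonic k = (z : ℚ) :=
  stmt_14_general k n hkn
end

section
/- In the classical secretary problem (p_j = 1/j), for every n ≥ 3 and every threshold k with 2 ≤ k ≤ n, R(k,n) ≠ 1; consequently the optimal threshold s(n) is unique. -/
/-!
Since `Q(k,n) = (k-1)/n`, the value `g(k) = Q(k,n) R(k,n)` of threshold `k` satisfies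
`n (g(k+1) - g(k)) = R(k+1,n) - 1` for `k ≥ 2`. As `R(·,n)` decreases, `g` increases strictly up to
the odds threshold `s(n)` and decreases strictly after it, provided no `R(k,n)` equals `1`.
That holds because `R(k,n) = ∑_{m=k-1}^{n-1} 1/m`: among two or more consecutive integers exactly
one has maximal 2-adic valuation, so the sum has negative 2-adic valuation.
-/

noncomputable def Rcsp (k n : ℕ) : ℝ := ∑ j ∈ Finset.Icc k n, (1 : ℝ) / (j - 1)

noncomputable def Qcsp (k n : ℕ) : ℝ := ∏ j ∈ Finset.Icc k n, ((j : ℝ) - 1) / j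

open Finset

lemma exists_two_pow_succ_dvd_mem_Icc {t u v : ℕ} (hu : 2 ^ t ∣ u) (hv : 2 ^ t ∣ v)
    (huv : u < v) : ∃ w ∈ Icc u v, 2 ^ (t + 1) ∣ w := by
  obtain ⟨c, rfl⟩ := hu
  obtain ⟨d, rfl⟩ := hv
  have hcd : c < d := lt_of_mul_lt_mul_left huv (Nat.zero_le _)
  rcases Nat.even_or_odd c with ⟨e, rfl⟩ | ⟨e, rfl⟩
  · exact ⟨2 ^ t * (e + e), mem_Icc.2 ⟨le_rfl, huv.le⟩, ⟨e, by ring⟩⟩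
  · refine ⟨2 ^ t * (2 * e + 1 + 1), mem_Icc.2 ⟨by gcongr; omega, by gcongr; omega⟩, ⟨e + 1, by ring⟩⟩

lemma padicValNat_two_lt_of_forall_le {a b m₀ m : ℕ} (ha : 0 < a) (hm₀ : m₀ ∈ Icc a b)
    (hmax : ∀ m ∈ Icc a b, padicValNat 2 m ≤ padicValNat 2 m₀) (hm : m ∈ Icc a b)
    (hne : m ≠ m₀) : padicValNat 2 m < padicValNat 2 m₀ := by
  by_contra! hge
  set t := padicValNat 2 m₀
  -- two distinct multiples of `2 ^ t` enclose a multiple of `2 ^ (t + 1)`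
  have key : ∀ u ∈ Icc a b, ∀ v ∈ Icc a b, u < v → 2 ^ t ∣ u → 2 ^ t ∣ v → False := by
    intro u hu v hv huv htu htv
    obtain ⟨w, hw, hdvd⟩ := exists_two_pow_succ_dvd_mem_Icc htu htv huv
    have hwab : w ∈ Icc a b := Icc_subset_Icc (mem_Icc.1 hu).1 (mem_Icc.1 hv).2 hw
    have := (padicValNat_dvd_iff_le (p := 2) (by grind)).1 hdvd
    exact absurd (hmax w hwab) (by omega)
  have htm : 2 ^ t ∣ m := (pow_dvd_pow 2 hge).trans pow_padicValNat_dvd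
  rcases lt_or_gt_of_ne hne with h | h
  · exact key m hm m₀ hm₀ h htm pow_padicValNat_dvd
  · exact key m₀ hm₀ m hm h pow_padicValNat_dvd htm

lemma padicValRat_inv_natCast {p : ℕ} [Fact p.Prime] (m : ℕ) :
    padicValRat p (1 / m) = -(padicValNat p m : ℤ) := by
  rw [one_div, padicValRat.inv, padicValRat.of_nat]

lemma padicValRat_lt_sum_inv {p : ℕ} [Fact p.Prime] {S : Finset ℕ} (hS : S.Nonempty)
    (hS0 : 0 ∉ S) {v : ℤ} (hv : ∀ i ∈ S, v < -(padicValNat p i : ℤ)) :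
    v < padicValRat p (∑ i ∈ S, (1 : ℚ) / i) := by
  have hpos : ∀ T ⊆ S, T.Nonempty → 0 < ∑ i ∈ T, (1 : ℚ) / i := fun T hT hTne =>
    sum_pos (fun i hi => by have : i ≠ 0 := fun h => hS0 (h ▸ hT hi); positivity) hTne
  induction hS using Finset.Nonempty.cons_induction with
  | singleton i =>
    simpa [padicValRat_inv_natCast] using hv i (mem_singleton_self i)
  | cons i T hiT hT ih =>
    have hi : v < padicValRat p (1 / i) := by
      simpa [padicValRat_inv_natCast] using hv i (mem_cons_self i T)
    have hT : v < padicValRat p (∑ j ∈ T, (1 : ℚ) / j) :=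
      ih (fun h => hS0 (mem_cons_of_mem h)) (fun j hj => hv j (mem_cons_of_mem hj))
        (fun U hU => hpos U (hU.trans (subset_cons hiT)))
    have hne := (hpos _ (Subset.refl _) (cons_nonempty hiT)).ne'
    rw [sum_cons] at hne ⊢
    exact (lt_min hi hT).trans_le (padicValRat.min_le_padicValRat_add hne)

lemma padicValRat_two_sum_Icc_inv_neg {a b : ℕ} (ha : 0 < a) (hab : a < b) :
    padicValRat 2 (∑ m ∈ Icc a b, (1 : ℚ) / m) < 0 := by
  obtain ⟨m₀, hm₀, hmax⟩ := exists_max_image (Icc a b) (padicValNat 2) (nonempty_Icc.2 hab.le)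
  have hm₀_pos : 1 ≤ padicValNat 2 m₀ := by
    obtain ⟨w, hw, hdvd⟩ := exists_two_pow_succ_dvd_mem_Icc (t := 0) (one_dvd a) (one_dvd b) hab
    exact ((padicValNat_dvd_iff_le (by grind)).1 hdvd).trans (hmax w hw)
  have hpos : ∀ m ∈ Icc a b, (0 : ℚ) < 1 / m := fun m hm => by
    have : 0 < m := ha.trans_le (mem_Icc.1 hm).1
    positivity
  have hne : ((Icc a b).erase m₀).Nonempty :=
    (erase_nonempty hm₀).2 ⟨a, by simp [hab.le], b, by simp [hab.le], hab.ne⟩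
  have hrest : padicValRat 2 (1 / m₀) < padicValRat 2 (∑ m ∈ (Icc a b).erase m₀, (1 : ℚ) / m) := by
    refine padicValRat_lt_sum_inv hne (by grind) fun m hm => ?_
    have := padicValNat_two_lt_of_forall_le ha hm₀ hmax (mem_of_mem_erase hm) (ne_of_mem_erase hm)
    rw [padicValRat_inv_natCast]
    omega
  have hsplit := add_sum_erase (Icc a b) (fun m => (1 : ℚ) / m) hm₀
  rw [← hsplit, padicValRat.add_eq_of_lt (hsplit ▸ (sum_pos hpos ⟨a, by simp [hab.le]⟩).ne')
    (hpos m₀ hm₀).ne' (sum_pos (fun m hm => hpos m (mem_of_mem_erase hm)) hne).ne' hrest,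
    padicValRat_inv_natCast]
  omega

lemma sum_Icc_inv_ne_one {a b : ℕ} (ha : 0 < a) (hb : 2 ≤ b) (hab : a ≤ b) :
    ∑ m ∈ Icc a b, (1 : ℚ) / m ≠ 1 := by
  rcases hab.lt_or_eq with hab | rfl
  · intro h
    have := padicValRat_two_sum_Icc_inv_neg ha hab
    rw [h, padicValRat.one] at this
    exact this.false
  · rw [Icc_self, sum_singleton, Ne, div_eq_one_iff_eq (by positivity)]
    exact_mod_cast (by omega : 1 ≠ a)

lemma Rcsp_add_one_add_one (a b : ℕ) : Rcsp (a + 1) (b + 1) = ∑ m ∈ Icc a b, (1 : ℝ) / m := by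
  rw [Rcsp, ← map_add_right_Icc, sum_map]
  simp

lemma Rcsp_ne_one {k n : ℕ} (hn : 3 ≤ n) (hk : 2 ≤ k) (hkn : k ≤ n) : Rcsp k n ≠ 1 := by
  obtain ⟨a, rfl⟩ : ∃ a, k = a + 1 := ⟨k - 1, by omega⟩
  obtain ⟨b, rfl⟩ : ∃ b, n = b + 1 := ⟨n - 1, by omega⟩
  rw [Rcsp_add_one_add_one]
  intro h
  have hℚ : ((∑ m ∈ Icc a b, (1 : ℚ) / m : ℚ) : ℝ) = 1 := by push_cast; exact h
  exact sum_Icc_inv_ne_one (a := a) (b := b) (by omega) (by omega) (by omega) (by exact_mod_cast hℚ)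

lemma Rcsp_eq_add_Rcsp_succ {k n : ℕ} (hkn : k ≤ n) :
    Rcsp k n = 1 / ((k : ℝ) - 1) + Rcsp (k + 1) n := by
  rw [Rcsp, Rcsp, Icc_eq_cons_Ioc hkn, sum_cons, Icc_add_one_left_eq_Ioc]

lemma one_div_natCast_sub_one_nonneg {j : ℕ} (hj : 1 ≤ j) : 0 ≤ 1 / ((j : ℝ) - 1) := by
  have : (1 : ℝ) ≤ j := by exact_mod_cast hj
  exact one_div_nonneg.2 (by linarith)

lemma Rcsp_nonneg {k : ℕ} (hk : 1 ≤ k) (n : ℕ) : 0 ≤ Rcsp k n :=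
  sum_nonneg fun _ hj => one_div_natCast_sub_one_nonneg (hk.trans (mem_Icc.1 hj).1)

lemma antitoneOn_Rcsp (n : ℕ) : AntitoneOn (fun k => Rcsp k n) (Set.Ici 1) := fun _ hk _ _ hkl =>
  sum_le_sum_of_subset_of_nonneg (Icc_subset_Icc_left hkl) fun _ hj _ =>
    one_div_natCast_sub_one_nonneg ((Set.mem_Ici.1 hk).trans (mem_Icc.1 hj).1)

lemma one_lt_Rcsp_two {n : ℕ} (hn : 3 ≤ n) : 1 < Rcsp 2 n := by
  rw [Rcsp_eq_add_Rcsp_succ (by omega : 2 ≤ n), Rcsp_eq_add_Rcsp_succ hn]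
  have := Rcsp_nonneg (k := 4) (by norm_num) n
  norm_num
  linarith

lemma Qcsp_eq_div {k n : ℕ} (hk : 1 ≤ k) (hkn : k ≤ n) : Qcsp k n = ((k : ℝ) - 1) / n := by
  induction n, hkn using Nat.le_induction with
  | base => rw [Qcsp, Icc_self, prod_singleton]
  | succ n hkn ih =>
    rw [Qcsp, ← insert_Icc_right_eq_Icc_add_one (by omega), prod_insert (by simp), ← Qcsp, ih]
    have : (0 : ℝ) < n := by exact_mod_cast hk.trans hkn
    push_cast
    field_simp
    ring

lemma Qcsp_mul_Rcsp_succ_sub {k n : ℕ} (hk : 2 ≤ k) (hkn : k < n) :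
    Qcsp (k + 1) n * Rcsp (k + 1) n - Qcsp k n * Rcsp k n = (Rcsp (k + 1) n - 1) / n := by
  rw [Qcsp_eq_div (by omega) hkn, Qcsp_eq_div (by omega) hkn.le, Rcsp_eq_add_Rcsp_succ hkn.le]
  have : (1 : ℝ) < k := by exact_mod_cast hk
  have : (k : ℝ) - 1 ≠ 0 := by linarith
  push_cast
  field_simp
  ring

lemma StrictMonoOn.lt_of_strictAntiOn {α β : Type*} [LinearOrder α] [Preorder β] {f : α → β}
    {a s b j : α} (hmono : StrictMonoOn f (Set.Icc a s)) (hanti : StrictAntiOn f (Set.Icc s b))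
    (hj : j ∈ Set.Icc a b) (hjs : j ≠ s) : f j < f s := by
  rcases hjs.lt_or_gt with h | h
  · exact hmono ⟨hj.1, h.le⟩ ⟨hj.1.trans h.le, le_rfl⟩ h
  · exact hanti ⟨le_rfl, h.le.trans hj.2⟩ ⟨h.le, hj.2⟩ h

/-- The threshold `s(n)` of the odds theorem: the last `k ≤ n` with `R(k,n) > 1` (`0` if none). -/
noncomputable def optimalThreshold (n : ℕ) : ℕ := Nat.findGreatest (fun k => 1 < Rcsp k n) n

section optimalThreshold

variable {n : ℕ}

lemma two_le_optimalThreshold (hn : 3 ≤ n) : 2 ≤ optimalThreshold n :=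
  Nat.le_findGreatest (by omega) (one_lt_Rcsp_two hn)

lemma optimalThreshold_le (n : ℕ) : optimalThreshold n ≤ n := Nat.findGreatest_le n

lemma one_lt_Rcsp_of_le_optimalThreshold (hn : 3 ≤ n) {k : ℕ} (hk : 1 ≤ k)
    (hks : k ≤ optimalThreshold n) : 1 < Rcsp k n :=
  (Nat.findGreatest_spec (P := fun k => 1 < Rcsp k n) (by omega) (one_lt_Rcsp_two hn)).trans_le
    (antitoneOn_Rcsp n hk (hk.trans hks) hks)

lemma Rcsp_lt_one_of_optimalThreshold_lt (hn : 3 ≤ n) {k : ℕ} (hsk : optimalThreshold n < k)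
    (hkn : k ≤ n) : Rcsp k n < 1 :=
  (not_lt.1 (Nat.findGreatest_is_greatest (P := fun k => 1 < Rcsp k n) hsk hkn)).lt_of_ne
    (Rcsp_ne_one hn ((two_le_optimalThreshold hn).trans hsk.le) hkn)

lemma strictMonoOn_Qcsp_mul_Rcsp (hn : 3 ≤ n) :
    StrictMonoOn (fun k => Qcsp k n * Rcsp k n) (Set.Icc 1 (optimalThreshold n)) := by
  refine strictMonoOn_of_lt_succ Set.ordConnected_Icc fun k _ hk hk1 => ?_
  rw [Order.succ_eq_add_one] at hk1 ⊢
  have hsn := optimalThreshold_le n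
  rcases (Set.mem_Icc.1 hk).1.eq_or_lt with rfl | hk2
  · rw [Qcsp_eq_div le_rfl (by omega), Qcsp_eq_div (by omega) (by omega)]
    have := one_lt_Rcsp_two hn
    norm_num
    positivity
  · have := Qcsp_mul_Rcsp_succ_sub (k := k) (n := n) hk2 (by grind)
    have := one_lt_Rcsp_of_le_optimalThreshold hn (by omega) (Set.mem_Icc.1 hk1).2
    have : 0 < (Rcsp (k + 1) n - 1) / n := div_pos (by linarith) (by positivity)
    linarith

lemma strictAntiOn_Qcsp_mul_Rcsp (hn : 3 ≤ n) :
    StrictAntiOn (fun k => Qcsp k n * Rcsp k n) (Set.Icc (optimalThreshold n) n) := by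
  refine strictAntiOn_of_succ_lt Set.ordConnected_Icc fun k _ hk hk1 => ?_
  rw [Order.succ_eq_add_one] at hk1 ⊢
  have := two_le_optimalThreshold hn
  have := Qcsp_mul_Rcsp_succ_sub (k := k) (n := n) (by grind) (by grind)
  have := Rcsp_lt_one_of_optimalThreshold_lt hn (k := k + 1) (by grind) (by grind)
  have : (Rcsp (k + 1) n - 1) / n < 0 := div_neg_of_neg_of_pos (by linarith) (by positivity)
  linarith

end optimalThreshold

theorem stmt_15 (n : ℕ) (hn : 3 ≤ n) :
    (∀ k, 2 ≤ k → k ≤ n → Rcsp k n ≠ 1) ∧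
    (∃! k, k ∈ Finset.Icc 1 n ∧
      ∀ j ∈ Finset.Icc 1 n, Qcsp j n * Rcsp j n ≤ Qcsp k n * Rcsp k n) := by
  set s := optimalThreshold n
  have hs : s ∈ Icc 1 n := mem_Icc.2 ⟨one_le_two.trans (two_le_optimalThreshold hn), optimalThreshold_le n⟩
  have hlt : ∀ j ∈ Icc 1 n, j ≠ s → Qcsp j n * Rcsp j n < Qcsp s n * Rcsp s n := fun j hj =>
    (strictMonoOn_Qcsp_mul_Rcsp hn).lt_of_strictAntiOn (strictAntiOn_Qcsp_mul_Rcsp hn)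
      (by simpa using hj)
  refine ⟨fun k hk hkn => Rcsp_ne_one hn hk hkn, s, ⟨hs, fun j hj => ?_⟩, fun k ⟨hk, hkmax⟩ => ?_⟩
  · rcases eq_or_ne j s with rfl | hjs
    · exact le_rfl
    · exact (hlt j hj hjs).le
  · by_contra hks
    exact (hkmax s hs).not_gt (hlt k hk hks)
end
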